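/- Let S be a finite interval of integers, let k < l be integers with {2k, …, 2l} ⊆ S, and let f ∈ Ξ̂_{k,l}. Then for every integer i with {2i−1, 2i, 2i+1} ⊆ S, the operators q_{2i} = c_{2i+1} c*_{2i} c_{2i−1} and Q(f) anticommute: q_{2i} Q(f) + Q(f) q_{2i} = 0, and likewise q_{2i}* Q(f) + Q(f) q_{2i}* = 0. -/

import Mathlib

/-!
`q_{2i}`, `q_{2i}*` and `Q(f)` are ordered products of Jordan–Wigner ladder operators at
distinct sites, with an odd number of factors (3 and `2(l - k) + 1`). If the windows
`{2i-1, 2i, 2i+1}` and `{2k, …, 2l}` are disjoint, ladder operators at different sites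
anticommute, so moving one product past the other costs an odd number of signs. If they
overlap, the conditions defining `Ξ̂_{k,l}` force a common site `m` at which both products
apply the same operator (`c_m` or `c*_m`); each product leaves site `m` in a fixed state and
annihilates every vector already in that state, so both products vanish.
-/

namespace Nicolai

/-- Configurations on the finite interval `S = {a, …, b}` of integers:
`true` = occupied, `false` = empty. -/
abbrev Config (a b : ℤ) : Type := {i : ℤ // i ∈ Finset.Icc a b} → Bool

/-- The Hilbert space `ℋ_S` with orthonormal basis indexed by configurations. -/
abbrev Hs (a b : ℤ) : Type := EuclideanSpace ℂ (Config a b)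

/-- The basis vector `e_g` associated to the configuration `g`. -/
noncomputable def e (a b : ℤ) (g : Config a b) : Hs a b := EuclideanSpace.single g 1

/-- The Jordan–Wigner sign exponent: the number of occupied sites strictly to the left of `i`. -/
noncomputable def signCount (a b : ℤ) (g : Config a b) (i : ℤ) : ℕ :=
  (Finset.univ.filter fun j : {x : ℤ // x ∈ Finset.Icc a b} => j.1 < i ∧ g j = true).card

/-- The annihilation operator `c_i` (zero if `i ∉ S`). -/
noncomputable def cAnn (a b : ℤ) (i : ℤ) : Module.End ℂ (Hs a b) where
  toFun ψ := WithLp.toLp 2 fun g =>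
    if hi : i ∈ Finset.Icc a b then
      if g ⟨i, hi⟩ = false then
        ((-1 : ℂ) ^ signCount a b g i) * ψ (Function.update g ⟨i, hi⟩ true)
      else 0
    else 0
  map_add' ψ φ := by
    ext g
    simp only [PiLp.add_apply, PiLp.toLp_apply]
    split_ifs <;> simp [mul_add]
  map_smul' c ψ := by
    ext g
    simp only [PiLp.smul_apply, PiLp.toLp_apply, smul_eq_mul, RingHom.id_apply]
    split_ifs <;> ring

/-- The creation operator `c*_i` (zero if `i ∉ S`). -/
noncomputable def cCr (a b : ℤ) (i : ℤ) : Module.End ℂ (Hs a b) where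
  toFun ψ := WithLp.toLp 2 fun g =>
    if hi : i ∈ Finset.Icc a b then
      if g ⟨i, hi⟩ = true then
        ((-1 : ℂ) ^ signCount a b g i) * ψ (Function.update g ⟨i, hi⟩ false)
      else 0
    else 0
  map_add' ψ φ := by
    ext g
    simp only [PiLp.add_apply, PiLp.toLp_apply]
    split_ifs <;> simp [mul_add]
  map_smul' c ψ := by
    ext g
    simp only [PiLp.smul_apply, PiLp.toLp_apply, smul_eq_mul, RingHom.id_apply]
    split_ifs <;> ring

/-- `q_{2i} = c_{2i+1} c*_{2i} c_{2i−1}`. -/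
noncomputable def qOp (a b i : ℤ) : Module.End ℂ (Hs a b) :=
  cAnn a b (2 * i + 1) * cCr a b (2 * i) * cAnn a b (2 * i - 1)

/-- The Nicolai supercharge `Q[k,l] = Σ_{i=k}^{l} q_{2i}`. -/
noncomputable def QNic (a b k l : ℤ) : Module.End ℂ (Hs a b) :=
  ∑ i ∈ Finset.Icc k l, qOp a b i

/-- Membership in `Ξ̂_{k,l}`: a `{−1,+1}`-valued function on `{2k, …, 2l}` with no
forbidden sign triplet at interior even sites, constant on each two-site edge. -/
def memXi (k l : ℤ) (f : ℤ → ℤ) : Prop :=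
  (∀ i ∈ Finset.Icc (2 * k) (2 * l), f i = 1 ∨ f i = -1) ∧
  (∀ i : ℤ, k < i → i < l →
    ¬(f (2 * i - 1) = -1 ∧ f (2 * i) = 1 ∧ f (2 * i + 1) = -1) ∧
    ¬(f (2 * i - 1) = 1 ∧ f (2 * i) = -1 ∧ f (2 * i + 1) = 1)) ∧
  f (2 * k) = f (2 * k + 1) ∧ f (2 * l - 1) = f (2 * l)

/-- `ζ_i(+1) = c*_i`, `ζ_i(−1) = c_i`. -/
noncomputable def zeta (a b i : ℤ) (v : ℤ) : Module.End ℂ (Hs a b) :=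
  if v = 1 then cCr a b i else if v = -1 then cAnn a b i else 0

/-- The local fermion operator `Q(f) = ζ_{2k}(f(2k)) ζ_{2k+1}(f(2k+1)) ⋯ ζ_{2l}(f(2l))`,
the product taken in increasing site order. -/
noncomputable def QF (a b k l : ℤ) (f : ℤ → ℤ) : Module.End ℂ (Hs a b) :=
  ((List.range (2 * l - 2 * k + 1).toNat).map
    (fun j => zeta a b (2 * k + (j : ℤ)) (f (2 * k + (j : ℤ))))).prod

/-- `g` has a forbidden triplet at the even site `2i`. -/
def forbiddenAt (g : ℤ → Bool) (i : ℤ) : Prop :=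
  (g (2 * i - 1) = false ∧ g (2 * i) = true ∧ g (2 * i + 1) = false) ∨
  (g (2 * i - 1) = true ∧ g (2 * i) = false ∧ g (2 * i + 1) = true)

/-- Membership in `Υ̂_{k,l}`: no forbidden triplet at interior even sites and the
open SUSY boundary condition (only the values on `{2k, …, 2l}` are relevant). -/
def memUps (k l : ℤ) (g : ℤ → Bool) : Prop :=
  (∀ i : ℤ, k < i → i < l → ¬ forbiddenAt g i) ∧
  g (2 * k) = g (2 * k + 1) ∧ g (2 * l - 1) = g (2 * l)

/-- Extend a configuration on `S` to all of `ℤ` by `false`. -/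
noncomputable def ext (a b : ℤ) (g : Config a b) : ℤ → Bool :=
  fun i => if h : i ∈ Finset.Icc a b then g ⟨i, h⟩ else false

/-- The charge `f ∈ Ξ̂_{k,l}` is applicable to the configuration `g`. -/
def applicable (k l : ℤ) (f : ℤ → ℤ) (g : ℤ → Bool) : Prop :=
  ∀ i : ℤ, 2 * k ≤ i → i ≤ 2 * l → (f i = 1 → g i = false) ∧ (f i = -1 → g i = true)

/-- The configuration `f·g` resulting from the action of the charge `f ∈ Ξ̂_{k,l}` on `g`. -/
def applyCharge (k l : ℤ) (f : ℤ → ℤ) (g : ℤ → Bool) : ℤ → Bool :=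
  fun i => if 2 * k ≤ i ∧ i ≤ 2 * l then decide (f i = 1) else g i

/-- `Reachable p q g₀ g`: `g` is obtained from `g₀` by finitely many applications of
applicable charges from `Ξ̂(p,q) = ⋃_{p ≤ k < l ≤ q} Ξ̂_{k,l}`. -/
inductive Reachable (p q : ℤ) : (ℤ → Bool) → (ℤ → Bool) → Prop
  | refl (g : ℤ → Bool) : Reachable p q g g
  | step {g₀ g : ℤ → Bool} (k l : ℤ) (f : ℤ → ℤ) :
      Reachable p q g₀ g → p ≤ k → k < l → l ≤ q → memXi k l f → applicable k l f g →
      Reachable p q g₀ (applyCharge k l f g)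

/-- The fermion parity operator `P e_g = (−1)^{#occupied sites} e_g`. -/
noncomputable def parity (a b : ℤ) : Module.End ℂ (Hs a b) where
  toFun ψ := WithLp.toLp 2 fun g =>
    ((-1 : ℂ) ^ (Finset.univ.filter fun j : {x : ℤ // x ∈ Finset.Icc a b} => g j = true).card)
      * ψ g
  map_add' ψ φ := by
    ext g
    simp only [PiLp.add_apply, PiLp.toLp_apply]
    ring
  map_smul' c ψ := by
    ext g
    simp only [PiLp.smul_apply, PiLp.toLp_apply, smul_eq_mul, RingHom.id_apply]
    ring

end Nicolai

section

theorem List.mul_prod_eq_neg_one_pow_mul {R : Type*} [Ring R] {x : R} {L : List R}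
    (h : ∀ z ∈ L, x * z = -(z * x)) : x * L.prod = (-1) ^ L.length * (L.prod * x) := by
  induction L with
  | nil => simp
  | cons z L ih =>
    rw [List.forall_mem_cons] at h
    rw [List.prod_cons, ← mul_assoc, h.1, neg_mul, mul_assoc, ih h.2]
    simp [pow_succ, mul_assoc, ((Commute.neg_one_left z).pow_left _).left_comm]

theorem List.prod_mul_prod_eq_neg_one_pow_mul {R : Type*} [Ring R] {L M : List R}
    (h : ∀ x ∈ L, ∀ y ∈ M, x * y = -(y * x)) :
    L.prod * M.prod = (-1) ^ (L.length * M.length) * (M.prod * L.prod) := by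
  induction L with
  | nil => simp
  | cons x L ih =>
    rw [List.forall_mem_cons] at h
    rw [List.prod_cons, mul_assoc, ih h.2, ((Commute.neg_one_right x).pow_right _).left_comm,
      ← mul_assoc x, List.mul_prod_eq_neg_one_pow_mul h.1]
    simp [add_mul, pow_add, mul_assoc]

variable {R M : Type*} [Semiring R] [AddCommMonoid M] [Module R M] {p : Submodule R M}
  {L : List (Module.End R M)}

theorem Submodule.le_comap_list_prod (h : ∀ A ∈ L, p ≤ p.comap A) : p ≤ p.comap L.prod := by
  induction L with
  | nil => intro x hx; simpa using hx
  | cons A L ih =>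
    rw [List.forall_mem_cons] at h
    intro x hx
    exact h.1 (ih h.2 hx)

theorem Submodule.range_list_prod_le (h : ∀ A ∈ L, p ≤ p.comap A) {z : Module.End R M}
    (hz : z ∈ L) (hzp : LinearMap.range z ≤ p) : LinearMap.range L.prod ≤ p := by
  obtain ⟨L₁, L₂, rfl⟩ := List.append_of_mem hz
  rintro _ ⟨x, rfl⟩
  rw [List.prod_append, List.prod_cons, Module.End.mul_apply, Module.End.mul_apply]
  exact Submodule.le_comap_list_prod (fun A hA => h A (by simp [hA])) (hzp ⟨_, rfl⟩)

theorem Submodule.le_ker_list_prod (h : ∀ A ∈ L, p ≤ p.comap A) {z : Module.End R M}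
    (hz : z ∈ L) (hzp : p ≤ LinearMap.ker z) : p ≤ LinearMap.ker L.prod := by
  obtain ⟨L₁, L₂, rfl⟩ := List.append_of_mem hz
  intro x hx
  rw [LinearMap.mem_ker, List.prod_append, List.prod_cons, Module.End.mul_apply,
    Module.End.mul_apply, hzp (Submodule.le_comap_list_prod (fun A hA => h A (by simp [hA])) hx),
    map_zero]

end

namespace Nicolai

section

variable {a b : ℤ}

/-- `ladder a b i v` leaves site `i` with occupation `v`. -/
noncomputable def ladder (a b i : ℤ) (v : Bool) : Module.End ℂ (Hs a b) :=
  if v then cCr a b i else cAnn a b i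

theorem ladder_apply (i : ℤ) (v : Bool) (ψ : Hs a b) (g : Config a b) :
    ladder a b i v ψ g =
      if hi : i ∈ Finset.Icc a b then
        if g ⟨i, hi⟩ = v then (-1 : ℂ) ^ signCount a b g i * ψ (Function.update g ⟨i, hi⟩ (!v))
        else 0
      else 0 := by
  cases v <;> rfl

theorem ladder_eq_zero_of_notMem {i : ℤ} (hi : i ∉ Finset.Icc a b) (v : Bool) :
    ladder a b i v = 0 := by
  ext ψ g
  simp [ladder_apply, hi]

theorem ladder_apply_site (i : {x : ℤ // x ∈ Finset.Icc a b}) (v : Bool) (ψ : Hs a b)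
    (g : Config a b) :
    ladder a b i v ψ g =
      if g i = v then (-1 : ℂ) ^ signCount a b g i * ψ (Function.update g i (!v)) else 0 := by
  rw [ladder_apply, dif_pos i.2]

theorem zeta_eq_ladder (i : ℤ) {x : ℤ} (hx : x = 1 ∨ x = -1) :
    zeta a b i x = ladder a b i (decide (x = 1)) := by
  rcases hx with rfl | rfl <;> simp [zeta, ladder]

theorem signCount_update_add (g : Config a b) (j : {x : ℤ // x ∈ Finset.Icc a b}) (u : Bool)
    (i : ℤ) :
    signCount a b (Function.update g j u) i + (if j.1 < i ∧ g j = true then 1 else 0)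
      = signCount a b g i + (if j.1 < i ∧ u = true then 1 else 0) := by
  simp only [signCount, Finset.card_filter]
  rw [← Finset.add_sum_erase _ _ (Finset.mem_univ j),
    ← Finset.add_sum_erase _ _ (Finset.mem_univ j),
    Finset.sum_congr rfl fun x hx => by rw [Function.update_of_ne (Finset.ne_of_mem_erase hx)],
    Function.update_self]
  omega

theorem signCount_update_of_le (g : Config a b) (j : {x : ℤ // x ∈ Finset.Icc a b}) (u : Bool)
    {i : ℤ} (h : i ≤ j.1) : signCount a b (Function.update g j u) i = signCount a b g i := by
  simpa [not_lt.2 h] using signCount_update_add g j u i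

theorem neg_one_pow_signCount_update_of_lt (g : Config a b) (j : {x : ℤ // x ∈ Finset.Icc a b})
    {u : Bool} (hu : g j ≠ u) {i : ℤ} (h : j.1 < i) :
    (-1 : ℂ) ^ signCount a b (Function.update g j u) i = -(-1) ^ signCount a b g i := by
  cases u
  · have key : signCount a b (Function.update g j false) i + 1 = signCount a b g i := by
      simpa [h, hu] using signCount_update_add g j false i
    rw [← key, pow_succ]; ring
  · have key : signCount a b (Function.update g j true) i = signCount a b g i + 1 := by
      simpa [h, hu] using signCount_update_add g j true i
    rw [key, pow_succ]; ring

/-- Of the two Jordan–Wigner strings, exactly the one of the right-hand site passes over the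
other site, whence the relative sign. -/
theorem neg_one_pow_signCount_update_mul_comm (g : Config a b)
    {I J : {x : ℤ // x ∈ Finset.Icc a b}} (hIJ : I ≠ J) {u w : Bool} (hu : g I ≠ u)
    (hw : g J ≠ w) :
    (-1 : ℂ) ^ signCount a b g I * (-1) ^ signCount a b (Function.update g I u) J
      = -((-1) ^ signCount a b g J * (-1) ^ signCount a b (Function.update g J w) I) := by
  rcases lt_or_gt_of_ne (Subtype.coe_injective.ne hIJ) with h | h
  · rw [neg_one_pow_signCount_update_of_lt g I hu h, signCount_update_of_le g J w h.le]; ring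
  · rw [signCount_update_of_le g I u h.le, neg_one_pow_signCount_update_of_lt g J hw h]; ring

theorem ladder_mul_ladder_of_ne {i j : ℤ} (hij : i ≠ j) (v w : Bool) :
    ladder a b i v * ladder a b j w = -(ladder a b j w * ladder a b i v) := by
  by_cases hi : i ∈ Finset.Icc a b
  swap; · simp [ladder_eq_zero_of_notMem hi]
  by_cases hj : j ∈ Finset.Icc a b
  swap; · simp [ladder_eq_zero_of_notMem hj]
  have hIJ : (⟨i, hi⟩ : {x : ℤ // x ∈ Finset.Icc a b}) ≠ ⟨j, hj⟩ := by simpa using hij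
  ext ψ g
  simp only [Module.End.mul_apply, LinearMap.neg_apply, PiLp.neg_apply, ladder_apply, dif_pos hi,
    dif_pos hj, Function.update_of_ne hIJ, Function.update_of_ne hIJ.symm]
  split_ifs with hv hw
  · rw [Function.update_comm hIJ, ← mul_assoc, ← mul_assoc,
      neg_one_pow_signCount_update_mul_comm g hIJ (u := !v) (w := !w) (by simp [hv])
        (by simp [hw]), neg_mul]
  all_goals simp

theorem adjoint_ladder (i : ℤ) (v : Bool) :
    LinearMap.adjoint (ladder a b i v) = ladder a b i (!v) := by
  by_cases hi : i ∈ Finset.Icc a b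
  swap; · simp [ladder_eq_zero_of_notMem hi]
  lift i to {x : ℤ // x ∈ Finset.Icc a b} using hi
  have flip_involutive : Function.Involutive fun g : Config a b => Function.update g i (!g i) :=
    fun g => by simp
  refine ((LinearMap.eq_adjoint_iff _ _).2 fun x y => ?_).symm
  simp only [PiLp.inner_apply, RCLike.inner_apply]
  refine Fintype.sum_bijective _ flip_involutive.bijective _ _ fun g => ?_
  simp only [ladder_apply_site, Function.update_self, Function.update_idem,
    signCount_update_of_le _ i _ le_rfl]
  by_cases hg : g i = v
  · simp [hg]
  · have hg' : g i = !v := Bool.eq_not.2 hg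
    have hfix : Function.update g i (!v) = g := by rw [← hg', Function.update_eq_self]
    simp only [hg', ↓reduceIte, Bool.not_not, map_mul, map_pow, map_neg, map_one, hfix]
    ring

/-- A site `m` outside `S` counts as empty here. -/
def supportedAt (a b m : ℤ) (v : Bool) : Submodule ℂ (Hs a b) where
  carrier := {ψ | ∀ g, ext a b g m ≠ v → ψ g = 0}
  add_mem' hψ hφ g hg := by simp [hψ g hg, hφ g hg]
  zero_mem' _ _ := rfl
  smul_mem' c ψ hψ g hg := by simp [hψ g hg]

theorem ext_of_mem (g : Config a b) {m : ℤ} (hm : m ∈ Finset.Icc a b) :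
    ext a b g m = g ⟨m, hm⟩ :=
  dif_pos hm

theorem ext_update_of_ne (g : Config a b) {j : {x : ℤ // x ∈ Finset.Icc a b}} (u : Bool) {m : ℤ}
    (h : j.1 ≠ m) : ext a b (Function.update g j u) m = ext a b g m := by
  unfold ext
  split_ifs with hm
  · exact Function.update_of_ne (fun e => h (congrArg Subtype.val e).symm) _ _
  · rfl

theorem range_ladder_le (m : ℤ) (v : Bool) :
    LinearMap.range (ladder a b m v) ≤ supportedAt a b m v := by
  rintro _ ⟨ψ, rfl⟩ g hg
  rw [ladder_apply]
  split_ifs with hm h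
  · exact absurd h (by rwa [ext_of_mem g hm] at hg)
  all_goals rfl

theorem supportedAt_le_ker_ladder (m : ℤ) (v : Bool) :
    supportedAt a b m v ≤ LinearMap.ker (ladder a b m v) := by
  intro ψ hψ
  rw [LinearMap.mem_ker]
  ext g
  rw [ladder_apply]
  split_ifs with hm
  · rw [hψ _ (by simp [ext_of_mem _ hm]), mul_zero]; rfl
  all_goals rfl

theorem supportedAt_le_comap_ladder {m j : ℤ} (h : j ≠ m) (u w : Bool) :
    supportedAt a b m u ≤ (supportedAt a b m u).comap (ladder a b j w) := by
  intro ψ hψ g hg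
  rw [ladder_apply]
  split_ifs with hj
  · rw [hψ _ (by rwa [ext_update_of_ne _ _ h]), mul_zero]
  all_goals rfl

noncomputable def ladderProd (a b : ℤ) (s : List ℤ) (φ : ℤ → Bool) : Module.End ℂ (Hs a b) :=
  (s.map fun m => ladder a b m (φ m)).prod

theorem supportedAt_le_comap_of_mem_ladderProd {s : List ℤ} {φ : ℤ → Bool} (m : ℤ) :
    ∀ A ∈ s.map (fun j => ladder a b j (φ j)),
      supportedAt a b m (φ m) ≤ (supportedAt a b m (φ m)).comap A := by
  simp only [List.forall_mem_map]
  intro j _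
  by_cases h : j = m
  · subst h
    exact fun ψ _ => range_ladder_le j (φ j) ⟨ψ, rfl⟩
  · exact supportedAt_le_comap_ladder h _ _

theorem range_ladderProd_le {s : List ℤ} {m : ℤ} (hm : m ∈ s) (φ : ℤ → Bool) :
    LinearMap.range (ladderProd a b s φ) ≤ supportedAt a b m (φ m) :=
  Submodule.range_list_prod_le (supportedAt_le_comap_of_mem_ladderProd m)
    (List.mem_map_of_mem hm) (range_ladder_le m (φ m))

theorem supportedAt_le_ker_ladderProd {s : List ℤ} {m : ℤ} (hm : m ∈ s) (φ : ℤ → Bool) :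
    supportedAt a b m (φ m) ≤ LinearMap.ker (ladderProd a b s φ) :=
  Submodule.le_ker_list_prod (supportedAt_le_comap_of_mem_ladderProd m)
    (List.mem_map_of_mem hm) (supportedAt_le_ker_ladder m (φ m))

theorem ladderProd_mul_ladderProd_eq_zero {s t : List ℤ} {φ ψ : ℤ → Bool} {m : ℤ} (hs : m ∈ s)
    (ht : m ∈ t) (h : φ m = ψ m) : ladderProd a b s φ * ladderProd a b t ψ = 0 :=
  LinearMap.range_le_ker_iff.1 <|
    (range_ladderProd_le ht ψ).trans (h ▸ supportedAt_le_ker_ladderProd hs φ)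

theorem ladderProd_mul_ladderProd_of_disjoint {s t : List ℤ} (h : s.Disjoint t)
    (φ ψ : ℤ → Bool) :
    ladderProd a b s φ * ladderProd a b t ψ
      = (-1) ^ (s.length * t.length) * (ladderProd a b t ψ * ladderProd a b s φ) := by
  have anticomm : ∀ x ∈ s.map (fun m => ladder a b m (φ m)),
      ∀ y ∈ t.map (fun m => ladder a b m (ψ m)), x * y = -(y * x) := by
    simp only [List.forall_mem_map]
    exact fun i hi j hj => ladder_mul_ladder_of_ne (by rintro rfl; exact h hi hj) _ _
  simpa [ladderProd] using List.prod_mul_prod_eq_neg_one_pow_mul anticomm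

theorem ladderProd_anticomm {s t : List ℤ} {φ ψ : ℤ → Bool} (hodd : Odd (s.length * t.length))
    (h : s.Disjoint t ∨ ∃ m ∈ s, m ∈ t ∧ φ m = ψ m) :
    ladderProd a b s φ * ladderProd a b t ψ + ladderProd a b t ψ * ladderProd a b s φ = 0 := by
  rcases h with h | ⟨m, hs, ht, hm⟩
  · rw [ladderProd_mul_ladderProd_of_disjoint h, hodd.neg_one_pow, neg_one_mul, neg_add_cancel]
  · rw [ladderProd_mul_ladderProd_eq_zero hs ht hm,
      ladderProd_mul_ladderProd_eq_zero ht hs hm.symm, add_zero]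

theorem adjoint_ladderProd (s : List ℤ) (φ : ℤ → Bool) :
    LinearMap.adjoint (ladderProd a b s φ) = ladderProd a b s.reverse (fun m => !φ m) := by
  induction s with
  | nil => simp [ladderProd]
  | cons m s ih =>
    simp only [ladderProd] at ih ⊢
    rw [List.map_cons, List.prod_cons, List.reverse_cons, List.map_append, List.prod_append,
      ← ih, List.map_singleton, List.prod_singleton, ← adjoint_ladder, Module.End.mul_eq_comp,
      Module.End.mul_eq_comp, LinearMap.adjoint_comp]

def chargeSites (k l : ℤ) : List ℤ :=
  (List.range (2 * l - 2 * k + 1).toNat).map fun j : ℕ => 2 * k + j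

theorem mem_chargeSites {k l m : ℤ} : m ∈ chargeSites k l ↔ 2 * k ≤ m ∧ m ≤ 2 * l := by
  simp only [chargeSites, List.mem_map, List.mem_range]
  constructor
  · rintro ⟨j, hj, rfl⟩
    omega
  · rintro ⟨h₁, h₂⟩
    exact ⟨(m - 2 * k).toNat, by omega, by omega⟩

theorem odd_length_chargeSites {k l : ℤ} (hkl : k ≤ l) : Odd (chargeSites k l).length := by
  rw [chargeSites, List.length_map, List.length_range]
  exact ⟨(l - k).toNat, by omega⟩

theorem QF_eq_ladderProd {k l : ℤ} {f : ℤ → ℤ}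
    (hf : ∀ m ∈ Finset.Icc (2 * k) (2 * l), f m = 1 ∨ f m = -1) :
    QF a b k l f = ladderProd a b (chargeSites k l) (fun m => decide (f m = 1)) := by
  -- `QF` lifts `List.range _ : List ℕ` to `List ℤ` through the list monad.
  rw [QF, ladderProd, chargeSites, List.map_map,
    show (do let j ← List.range (2 * l - 2 * k + 1).toNat; pure (j : ℤ))
      = (List.range (2 * l - 2 * k + 1).toNat).map ((↑) : ℕ → ℤ) from
    List.flatMap_pure_eq_map _ _, List.map_map]
  refine congrArg List.prod (List.map_congr_left fun j hj => ?_)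
  rw [List.mem_range] at hj
  exact zeta_eq_ladder _ (hf _ (Finset.mem_Icc.2 (by omega)))

def qPattern (i : ℤ) (v : Bool) (m : ℤ) : Bool :=
  if m = 2 * i then v else !v

theorem qOp_eq_ladderProd (i : ℤ) :
    qOp a b i = ladderProd a b [2 * i + 1, 2 * i, 2 * i - 1] (qPattern i true) := by
  simp [qOp, ladderProd, qPattern, ladder, mul_assoc]

theorem adjoint_qOp (i : ℤ) :
    LinearMap.adjoint (qOp a b i)
      = ladderProd a b [2 * i - 1, 2 * i, 2 * i + 1] (qPattern i false) := by
  rw [qOp_eq_ladderProd, adjoint_ladderProd]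
  congr 1
  funext m
  simp [qPattern]

/-- On the part of the window `{2i-1, 2i, 2i+1}` inside `{2k, …, 2l}`, `f` cannot be the
opposite of the pattern of `q_{2i}` or `q_{2i}*`: in the interior that is a forbidden triplet,
at either end it contradicts the boundary condition. -/
theorem exists_qPattern_eq_of_memXi {k l : ℤ} (hkl : k < l) {f : ℤ → ℤ} (hf : memXi k l f)
    {i : ℤ} (hki : k ≤ i) (hil : i ≤ l) (v : Bool) :
    ∃ m, (2 * k ≤ m ∧ m ≤ 2 * l) ∧ (2 * i - 1 ≤ m ∧ m ≤ 2 * i + 1) ∧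
      qPattern i v m = decide (f m = 1) := by
  obtain ⟨hpm, hforb, hleft, hright⟩ := hf
  by_contra! h
  obtain ⟨σ, hσ, hσv⟩ : ∃ σ : ℤ, (σ = 1 ∨ σ = -1) ∧ (σ = 1 ↔ v) := by
    cases v
    exacts [⟨-1, by simp⟩, ⟨1, by simp⟩]
  have at_site : ∀ m, 2 * k ≤ m → m ≤ 2 * l → 2 * i - 1 ≤ m → m ≤ 2 * i + 1 →
      f m = if m = 2 * i then -σ else σ := by
    intro m h₁ h₂ h₃ h₄
    have := h m ⟨h₁, h₂⟩ ⟨h₃, h₄⟩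
    rcases hpm m (Finset.mem_Icc.2 ⟨h₁, h₂⟩) with e | e <;> rcases hσ with rfl | rfl <;>
      by_cases hm : m = 2 * i <;> simp_all [qPattern]
  have centre := at_site (2 * i) (by omega) (by omega) (by omega) (by omega)
  rw [if_pos rfl] at centre
  rcases hki.eq_or_lt with hik | hki
  · have right := at_site (2 * i + 1) (by omega) (by omega) (by omega) (by omega)
    rw [if_neg (by omega)] at right
    rw [hik] at hleft
    omega
  rcases hil.eq_or_lt with hil | hil
  · have left := at_site (2 * i - 1) (by omega) (by omega) (by omega) (by omega)
    rw [if_neg (by omega)] at left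
    rw [← hil] at hright
    omega
  have left := at_site (2 * i - 1) (by omega) (by omega) (by omega) (by omega)
  have right := at_site (2 * i + 1) (by omega) (by omega) (by omega) (by omega)
  rw [if_neg (by omega)] at left right
  have := hforb i hki hil
  omega

theorem ladderProd_qPattern_anticomm_QF {k l : ℤ} (hkl : k < l) {f : ℤ → ℤ} (hf : memXi k l f)
    {i : ℤ} (v : Bool) {s : List ℤ} (hs3 : s.length = 3)
    (hs : ∀ m, m ∈ s ↔ 2 * i - 1 ≤ m ∧ m ≤ 2 * i + 1) :
    ladderProd a b s (qPattern i v) * QF a b k l f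
      + QF a b k l f * ladderProd a b s (qPattern i v) = 0 := by
  rw [QF_eq_ladderProd hf.1]
  have hodd := Odd.mul (by decide : Odd 3) (odd_length_chargeSites hkl.le)
  refine ladderProd_anticomm (by rwa [hs3]) ?_
  by_cases hover : k ≤ i ∧ i ≤ l
  · obtain ⟨m, hmQ, hmq, hm⟩ := exists_qPattern_eq_of_memXi hkl hf hover.1 hover.2 v
    exact Or.inr ⟨m, (hs m).2 hmq, mem_chargeSites.2 hmQ, hm⟩
  · exact Or.inl fun m hm hm' => hover (by rw [hs] at hm; rw [mem_chargeSites] at hm'; omega)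

end

theorem q_anticommutes_with_local_charge_general (a b k l : ℤ) (hkl : k < l)
    (f : ℤ → ℤ) (hf : memXi k l f) (i : ℤ) :
    qOp a b i * QF a b k l f + QF a b k l f * qOp a b i = 0 ∧
    LinearMap.adjoint (qOp a b i) * QF a b k l f
      + QF a b k l f * LinearMap.adjoint (qOp a b i) = 0 := by
  rw [adjoint_qOp, qOp_eq_ladderProd]
  exact ⟨ladderProd_qPattern_anticomm_QF hkl hf true rfl fun m => by
      simp only [List.mem_cons, List.not_mem_nil, or_false]; omega,
    ladderProd_qPattern_anticomm_QF hkl hf false rfl fun m => by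
      simp only [List.mem_cons, List.not_mem_nil, or_false]; omega⟩

/-- `q_{2i}` and `q_{2i}*` anticommute with the local fermion
operator `Q(f)` whenever `{2i−1, 2i, 2i+1} ⊆ S`. -/
theorem q_anticommutes_with_local_charge (a b k l : ℤ) (hkl : k < l)
    (hS : Finset.Icc (2 * k) (2 * l) ⊆ Finset.Icc a b)
    (f : ℤ → ℤ) (hf : memXi k l f) (i : ℤ)
    (hi : Finset.Icc (2 * i - 1) (2 * i + 1) ⊆ Finset.Icc a b) :
    qOp a b i * QF a b k l f + QF a b k l f * qOp a b i = 0 ∧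
    LinearMap.adjoint (qOp a b i) * QF a b k l f
      + QF a b k l f * LinearMap.adjoint (qOp a b i) = 0 :=
  q_anticommutes_with_local_charge_general a b k l hkl f hf i

end Nicolai
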